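/- arXiv:2507.00991 — 2 statements merged into one kernel-verified Lean document; each statement's English description precedes it below -/
import Mathlib

section
/- Let J ∈ ℕ and for each j = 0,…,J let X_j be a Hilbert space with continuous pairing ⟨·,·⟩_{X_j}, and C_j : X_j → X_j bounded operators admitting compact T_j : X_j → X_j and a uniform constant c > 0 with Re⟨(C_j + T_j)g_j, conj(g_j)⟩_{X_j} ≥ c‖g_j‖²_{X_j} for all g_j ∈ X_j. Let X = ∏_j X_j with pairing ⟨g,h⟩_X = Σ_j ⟨g_j,h_j⟩_{X_j} and squared norm Σ_j ‖g_j‖². Let X₀ ⊂ X be a closed subspace on which the pairing is totally isotropic, i.e., Σ_j ⟨g_j, conj(h_j)⟩_{X_j} = 0 for all g, h ∈ X₀. Then the operator A := −½ id + diag(C_j) satisfies: there exists a compact operator T : X → X with Re⟨(A + T)g, ḡ⟩_X ≥ c‖g‖²_X for all g ∈ X₀. -/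
/-- Lemma 5.3 (Gårding inequality for the single-trace operator) in abstract form:
if each Calderón operator `C j` is coercive modulo a compact operator `T j` with a
uniform constant `c` relative to pairings `pair j`, and the product pairing
vanishes identically on the closed single-trace subspace `X₀` of the `ℓ²`-product,
then `A = -½ id + diag(C j)` is coercive on `X₀` modulo a compact operator `T`. -/
theorem stmt11 {J : ℕ} (X : Fin (J + 1) → Type*)
    [∀ j, NormedAddCommGroup (X j)] [∀ j, InnerProductSpace ℂ (X j)]
    [∀ j, CompleteSpace (X j)]
    (pair : ∀ j, X j → X j → ℂ)
    (hpair_add_left : ∀ j, ∀ a b h : X j, pair j (a + b) h = pair j a h + pair j b h)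
    (C T : ∀ j, X j →L[ℂ] X j)
    (hTcpt : ∀ j, IsCompactOperator ⇑(T j))
    (c : ℝ) (hc : 0 < c)
    (hcoer : ∀ j, ∀ g : X j, c * ‖g‖ ^ 2 ≤ (pair j (C j g + T j g) g).re)
    (X₀ : Submodule ℂ (PiLp 2 X)) (hX₀ : IsClosed (X₀ : Set (PiLp 2 X)))
    (hiso : ∀ g ∈ X₀, ∀ h ∈ X₀, ∑ j, pair j (g j) (h j) = 0) :
    ∃ Tbig : PiLp 2 X →L[ℂ] PiLp 2 X, IsCompactOperator ⇑Tbig ∧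
      ∀ g ∈ X₀, c * ‖g‖ ^ 2 ≤
        (∑ j, pair j ((C j (g j) - (2⁻¹ : ℂ) • g j) + Tbig g j) (g j)).re := by
  classical
  set e := PiLp.continuousLinearEquiv 2 ℂ X with he
  set S : (∀ j, X j) →L[ℂ] (∀ j, X j) :=
    ContinuousLinearMap.pi (fun j => (T j) ∘L (ContinuousLinearMap.proj j)) with hS
  set Tbig : PiLp 2 X →L[ℂ] PiLp 2 X :=
    (e.symm.toContinuousLinearMap ∘L S) ∘L e.toContinuousLinearMap with hTbig
  have hSapp : ∀ (x : ∀ j, X j) (j : _), S x j = T j (x j) := fun x j => rfl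
  have hTbigapp : ∀ (g : PiLp 2 X) (j : _), Tbig g j = T j (g j) := fun g j => rfl
  have hScpt : IsCompactOperator ⇑S := by
    choose K hKc hKn using hTcpt
    refine ⟨Set.univ.pi K, isCompact_univ_pi hKc, ?_⟩
    have heq : ⇑S ⁻¹' Set.univ.pi K
        = ⋂ j, (fun x : ∀ i, X i => x j) ⁻¹' (⇑(T j) ⁻¹' (K j)) := by
      ext x; simp [Set.mem_pi, hSapp]
    rw [heq]
    rw [Filter.iInter_mem]
    intro j
    have ht : Filter.Tendsto (fun x : ∀ i, X i => x j) (nhds 0) (nhds (0 : X j)) :=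
      (continuous_apply j).tendsto 0
    exact ht (hKn j)
  refine ⟨Tbig, ?_, ?_⟩
  · exact ((hScpt.comp_clm e.toContinuousLinearMap).continuous_comp
      e.symm.toContinuousLinearMap.continuous)
  · intro g hg
    have hg' : (-(2⁻¹ : ℂ)) • g ∈ X₀ := X₀.smul_mem _ hg
    have hzero : ∑ j, pair j (((-(2⁻¹ : ℂ)) • g) j) (g j) = 0 := hiso _ hg' _ hg
    have hsplit : ∀ j, pair j ((C j (g j) - (2⁻¹ : ℂ) • g j) + Tbig g j) (g j)
        = pair j (C j (g j) + T j (g j)) (g j) + pair j (((-(2⁻¹ : ℂ)) • g) j) (g j) := by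
      intro j
      rw [hTbigapp]
      have h1 : (C j (g j) - (2⁻¹ : ℂ) • g j) + T j (g j)
          = (C j (g j) + T j (g j)) + (-(2⁻¹ : ℂ)) • g j := by
        rw [neg_smul]; abel
      rw [h1, hpair_add_left]
      congr 1
    calc c * ‖g‖ ^ 2 = ∑ j, c * ‖g j‖ ^ 2 := by
          rw [PiLp.norm_sq_eq_of_L2, Finset.mul_sum]
      _ ≤ ∑ j, (pair j (C j (g j) + T j (g j)) (g j)).re :=
          Finset.sum_le_sum fun j _ => hcoer j (g j)
      _ = (∑ j, pair j ((C j (g j) - (2⁻¹ : ℂ) • g j) + Tbig g j) (g j)).re := by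
          simp_rw [hsplit, Finset.sum_add_distrib, hzero, add_zero, Complex.re_sum]
end

section
/- Let s ∈ ℂ with Re(s) > 0 and s ≠ 0. Let l(v,w) = a(v,w) + s² b(v,w) − d(v,w) be a sesquilinear form on a Hilbert space where a(v,v) ≥ a_min‖∇v‖², b(v,v) ≥ p_min‖v‖² with a_min, p_min ∈ (0,1], and Re(s̄·d(v,v)) ≤ 0 for all v. Then Re((s̄/|s|)·l(v,v)) ≥ min{a_min, p_min}·(Re s/|s|)·(‖∇v‖² + |s|²‖v‖²) for all v. Consequently, the solution operator N of the problem l(u,·) = F satisfies the bound C_N(s) ≤ max{a_min^{-1}, p_min^{-1}}·|s|/Re(s) in the weighted norms ‖v‖²_{H¹,s} = ‖∇v‖² + |s|²‖v‖². -/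
/-!
Since `s̄ s² = |s|² s`, the real part of `s̄ l(v,v)` equals
`Re s · a(v,v) + |s|² Re s · b(v,v) - Re(s̄ d(v,v))`, and each of the three terms is
controlled by the hypotheses; dividing by `|s|` gives the coercivity estimate with constant
`c = min{a_min, p_min} Re s / |s|`. Testing `l(u,·) = F` with `u` itself then gives
`c ‖u‖² ≤ |l(u,u)| = |F(u)| ≤ ‖F‖ ‖u‖`, i.e. the Lax–Milgram bound `‖u‖ ≤ ‖F‖ / c`.
-/

open ComplexConjugate

lemma max_inv_eq_inv_min {a b : ℝ} (ha : 0 < a) (hb : 0 < b) :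
    max a⁻¹ b⁻¹ = (min a b)⁻¹ := by
  rcases le_total a b with hab | hab
  · rw [min_eq_left hab, max_eq_left (inv_anti₀ ha hab)]
  · rw [min_eq_right hab, max_eq_right (inv_anti₀ hb hab)]

lemma le_div_of_mul_sq_le_mul {c C t : ℝ} (hc : 0 < c) (hC : 0 ≤ C) (ht : 0 ≤ t)
    (h : c * t ^ 2 ≤ C * t) : t ≤ C / c := by
  rcases ht.eq_or_lt with rfl | ht
  · positivity
  · rw [le_div_iff₀ hc]
    nlinarith

namespace Complex

lemma conj_mul_sq (s : ℂ) : conj s * s ^ 2 = (‖s‖ ^ 2 : ℝ) * s := by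
  rw [sq s, ← mul_assoc, conj_mul']
  norm_cast

lemma re_conj_mul_add_sq_mul_sub (s d : ℂ) (a b : ℝ) :
    (conj s * ((a : ℂ) + s ^ 2 * b - d)).re
      = s.re * a + ‖s‖ ^ 2 * s.re * b - (conj s * d).re := by
  have hb : conj s * (s ^ 2 * b) = ((‖s‖ ^ 2 * b : ℝ) : ℂ) * s := by
    rw [← mul_assoc, conj_mul_sq]
    push_cast
    ring
  rw [mul_sub, mul_add, sub_re, add_re, hb, re_mul_ofReal, re_ofReal_mul, conj_re]
  ring

lemma norm_conj_div_norm {s : ℂ} (hs : s ≠ 0) : ‖conj s / (‖s‖ : ℂ)‖ = 1 := by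
  rw [norm_div, norm_conj, norm_real, Real.norm_of_nonneg (norm_nonneg s),
    div_self (norm_ne_zero_iff.mpr hs)]

/-- Here `g`, `n` play the roles of `‖∇v‖²`, `‖v‖²`. For `s = 0` both sides are `0` by the
convention `x / 0 = 0`. -/
lemma mul_le_re_conj_div_norm_mul {s d : ℂ} (hres : 0 ≤ s.re) {m g n a b : ℝ}
    (ha : m * g ≤ a) (hb : m * n ≤ b) (hd : (conj s * d).re ≤ 0) :
    m * (s.re / ‖s‖) * (g + ‖s‖ ^ 2 * n)
      ≤ (conj s / (‖s‖ : ℂ) * ((a : ℂ) + s ^ 2 * b - d)).re := by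
  rw [div_mul_eq_mul_div, div_ofReal_re, re_conj_mul_add_sq_mul_sub,
    show m * (s.re / ‖s‖) * (g + ‖s‖ ^ 2 * n)
      = (s.re * (m * g) + ‖s‖ ^ 2 * s.re * (m * n)) / ‖s‖ by ring]
  gcongr ?_ / _
  have hsb : 0 ≤ ‖s‖ ^ 2 * s.re := by positivity
  linarith [mul_le_mul_of_nonneg_left ha hres, mul_le_mul_of_nonneg_left hb hsb]

end Complex

theorem stmt13_general {H : Type*} (s : ℂ) (hres : 0 < s.re)
    (amin pmin : ℝ) (hamin0 : 0 < amin)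
    (hpmin0 : 0 < pmin)
    (ngrad nL2 : H → ℝ)
    (l2 : H → H → ℂ) (qa qb : H → ℝ) (qd : H → ℂ)
    (hdecomp : ∀ v, l2 v v = (qa v : ℂ) + s ^ 2 * (qb v : ℂ) - qd v)
    (ha : ∀ v, amin * (ngrad v) ^ 2 ≤ qa v)
    (hb : ∀ v, pmin * (nL2 v) ^ 2 ≤ qb v)
    (hd : ∀ v, ((starRingEnd ℂ) s * qd v).re ≤ 0) :
    (∀ v : H, min amin pmin * (s.re / ‖s‖) *
        ((ngrad v) ^ 2 + (‖s‖) ^ 2 * (nL2 v) ^ 2) ≤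
      (((starRingEnd ℂ) s / (‖s‖ : ℂ)) * l2 v v).re) ∧
    (∀ (u : H) (F : H → ℂ) (CF : ℝ), 0 ≤ CF →
      (∀ v, l2 u v = F v) →
      (∀ v, ‖F v‖ ≤
        CF * Real.sqrt ((ngrad v) ^ 2 + (‖s‖) ^ 2 * (nL2 v) ^ 2)) →
      Real.sqrt ((ngrad u) ^ 2 + (‖s‖) ^ 2 * (nL2 u) ^ 2) ≤
        max amin⁻¹ pmin⁻¹ * (‖s‖ / s.re) * CF) := by
  have coercive : ∀ v, min amin pmin * (s.re / ‖s‖) * (ngrad v ^ 2 + ‖s‖ ^ 2 * nL2 v ^ 2)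
      ≤ (conj s / (‖s‖ : ℂ) * l2 v v).re := fun v => by
    rw [hdecomp v]
    exact Complex.mul_le_re_conj_div_norm_mul hres.le
      ((mul_le_mul_of_nonneg_right (min_le_left _ _) (sq_nonneg _)).trans (ha v))
      ((mul_le_mul_of_nonneg_right (min_le_right _ _) (sq_nonneg _)).trans (hb v)) (hd v)
  refine ⟨coercive, fun u F CF hCF hl hF => ?_⟩
  have hs : s ≠ 0 := fun h => by simp [h] at hres
  have hc : 0 < min amin pmin * (s.re / ‖s‖) := by
    have := norm_pos_iff.mpr hs
    positivity
  have energy : min amin pmin * (s.re / ‖s‖) * √(ngrad u ^ 2 + ‖s‖ ^ 2 * nL2 u ^ 2) ^ 2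
      ≤ CF * √(ngrad u ^ 2 + ‖s‖ ^ 2 * nL2 u ^ 2) :=
    calc _ ≤ (conj s / (‖s‖ : ℂ) * l2 u u).re := by
          rw [Real.sq_sqrt (by positivity)]
          exact coercive u
      _ ≤ ‖conj s / (‖s‖ : ℂ) * l2 u u‖ := Complex.re_le_norm _
      _ = ‖l2 u u‖ := by rw [norm_mul, Complex.norm_conj_div_norm hs, one_mul]
      _ ≤ _ := hl u ▸ hF u
  calc _ ≤ CF / (min amin pmin * (s.re / ‖s‖)) :=
        le_div_of_mul_sq_le_mul hc hCF (Real.sqrt_nonneg _) energy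
    _ = _ := by rw [max_inv_eq_inv_min hamin0 hpmin0]; field_simp

/-- Remark 3.5 in abstract form (coercivity for `Re s > 0`): if
`l(v,v) = a(v,v) + s² b(v,v) - d(v,v)` with `a(v,v) ≥ a_min‖∇v‖²`,
`b(v,v) ≥ p_min‖v‖²` for `a_min, p_min ∈ (0,1]`, and `Re(s̄ d(v,v)) ≤ 0`, then
`Re((s̄/|s|) l(v,v)) ≥ min{a_min,p_min} (Re s/|s|) (‖∇v‖² + |s|²‖v‖²)`; hence any
solution `u` of `l(u,·) = F` satisfies
`‖u‖_{H¹,s} ≤ max{a_min⁻¹, p_min⁻¹} (|s|/Re s) ‖F‖`. -/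
theorem stmt13 {H : Type*} (s : ℂ) (hs : s ≠ 0) (hres : 0 < s.re)
    (amin pmin : ℝ) (hamin0 : 0 < amin) (hamin1 : amin ≤ 1)
    (hpmin0 : 0 < pmin) (hpmin1 : pmin ≤ 1)
    (ngrad nL2 : H → ℝ) (hng : ∀ v, 0 ≤ ngrad v) (hnL : ∀ v, 0 ≤ nL2 v)
    (l2 : H → H → ℂ) (qa qb : H → ℝ) (qd : H → ℂ)
    (hdecomp : ∀ v, l2 v v = (qa v : ℂ) + s ^ 2 * (qb v : ℂ) - qd v)
    (ha : ∀ v, amin * (ngrad v) ^ 2 ≤ qa v)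
    (hb : ∀ v, pmin * (nL2 v) ^ 2 ≤ qb v)
    (hd : ∀ v, ((starRingEnd ℂ) s * qd v).re ≤ 0) :
    (∀ v : H, min amin pmin * (s.re / ‖s‖) *
        ((ngrad v) ^ 2 + (‖s‖) ^ 2 * (nL2 v) ^ 2) ≤
      (((starRingEnd ℂ) s / (‖s‖ : ℂ)) * l2 v v).re) ∧
    (∀ (u : H) (F : H → ℂ) (CF : ℝ), 0 ≤ CF →
      (∀ v, l2 u v = F v) →
      (∀ v, ‖F v‖ ≤
        CF * Real.sqrt ((ngrad v) ^ 2 + (‖s‖) ^ 2 * (nL2 v) ^ 2)) →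
      Real.sqrt ((ngrad u) ^ 2 + (‖s‖) ^ 2 * (nL2 u) ^ 2) ≤
        max amin⁻¹ pmin⁻¹ * (‖s‖ / s.re) * CF) :=
  stmt13_general s hres amin pmin hamin0 hpmin0 ngrad nL2 l2 qa qb qd hdecomp ha hb hd
end
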